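/- For any bi-infinite sequence B ∈ {1,2}^ℤ, if B_{j-2}B_{j-1}B_j B_{j+1}B_{j+2} = 1,1,2,1,1, then λ_j(B) < [2;1,1,1,2,1] + [0;1,1,1,2,1] = 36/11 < α_∞ - 10^{-2}. -/

import Mathlib

/-!
Write `λ_j(B) = [2; 1, 1, t] + [0; 1, 1, s]`, where the tails `t` and `s` are continued fractions
with partial quotients in `{1, 2}`. Three levels of interval propagation starting from `[1, 3]`
give `t, s ≥ [1; 2, 1, 3] = 15/11`, and `[2; 1, 1, t]` is decreasing in `t`, so
`λ_j(B) ≤ 108/41 + 26/41 = 134/41 < 36/11`. Conversely, `α_∞` is bounded below by replacing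
its tails after ten partial quotients by `15/11`, the prefixes having even length.
-/

open Filter Topology

/-- Value of a finite continued fraction `[a₀; a₁, …, aₙ]` with natural-number entries
(the empty list has value 0, and a trailing `1/0 = 0` convention makes the recursion correct). -/
noncomputable def cfList : List ℕ → ℝ
  | [] => 0
  | a :: l => (a : ℝ) + 1 / cfList l

/-- `n`-th convergent `[a 0; a 1, …, a n]` of the infinite continued fraction with entries `a`. -/
noncomputable def cfConvs (a : ℕ → ℕ) (n : ℕ) : ℝ :=
  cfList ((List.range (n + 1)).map a)

/-- `CFLim a x` : the infinite continued fraction `[a 0; a 1, a 2, …]` converges to `x`. -/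
def CFLim (a : ℕ → ℕ) (x : ℝ) : Prop :=
  Tendsto (cfConvs a) atTop (nhds x)

/-- The eventually periodic sequence of partial quotients with preperiod `pre` and period `per`. -/
def epseq (pre per : List ℕ) : ℕ → ℕ :=
  fun n => if n < pre.length then pre.getD n 0 else per.getD ((n - pre.length) % per.length) 0

/-- `IsLambda B j v` : for the bi-infinite sequence `B`,
`v = λ_j(B) = [B j; B (j+1), …] + [0; B (j-1), B (j-2), …]`. -/
def IsLambda (B : ℤ → ℕ) (j : ℤ) (v : ℝ) : Prop :=
  ∃ x y : ℝ,
    CFLim (fun n => B (j + n)) x ∧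
    CFLim (fun n => if n = 0 then 0 else B (j - n)) y ∧
    v = x + y

open Set

/-- `cfWithTail [a₀, …, aₙ] t = [a₀; a₁, …, aₙ, t]` for a real tail `t`. -/
noncomputable def cfWithTail : List ℕ → ℝ → ℝ
  | [], t => t
  | a :: p, t => (a : ℝ) + 1 / cfWithTail p t

lemma cfList_cons (a : ℕ) (l : List ℕ) : cfList (a :: l) = (a : ℝ) + 1 / cfList l := rfl

lemma cfList_append (p l : List ℕ) : cfList (p ++ l) = cfWithTail p (cfList l) := by
  induction p with
  | nil => rfl
  | cons a p ih => simp only [List.cons_append, cfList_cons, cfWithTail, ih]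

lemma cfConvs_add (a : ℕ → ℕ) (m n : ℕ) :
    cfConvs a (m + n) = cfWithTail ((List.range m).map a) (cfConvs (fun k => a (m + k)) n) := by
  unfold cfConvs
  rw [show m + n + 1 = m + (n + 1) by omega, List.range_add, List.map_append, List.map_map,
    cfList_append]
  rfl

lemma cfWithTail_pos : ∀ (p : List ℕ) {t : ℝ}, 0 < t → 0 < cfWithTail p t
  | [], _, ht => ht
  | a :: p, _, ht => by
    have := cfWithTail_pos p ht
    simp only [cfWithTail]
    positivity

lemma cfWithTail_monotoneOn_of_even_antitoneOn_of_odd :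
    ∀ p : List ℕ, (Even p.length → MonotoneOn (cfWithTail p) (Ioi 0)) ∧
      (Odd p.length → AntitoneOn (cfWithTail p) (Ioi 0))
  | [] => ⟨fun _ _ _ _ _ h => h, fun h => absurd h (by simp)⟩
  | a :: p => by
    obtain ⟨ih_even, ih_odd⟩ := cfWithTail_monotoneOn_of_even_antitoneOn_of_odd p
    refine ⟨fun h s hs t ht hst => ?_, fun h s hs t ht hst => ?_⟩
    · have := ih_odd (by simpa [Nat.even_add_one] using h) hs ht hst
      simp only [cfWithTail]
      gcongr
      exact cfWithTail_pos p ht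
    · have := ih_even (by simpa [Nat.odd_add_one] using h) hs ht hst
      simp only [cfWithTail]
      gcongr
      exact cfWithTail_pos p hs

lemma cfList_cons_mem_Icc {a : ℕ} (ha : a = 1 ∨ a = 2) {l : List ℕ} {lo hi : ℝ} (hlo : 0 < lo)
    (hl : cfList l ∈ Icc lo hi) : cfList (a :: l) ∈ Icc (1 + 1 / hi) (2 + 1 / lo) := by
  have hpos : 0 < cfList l := hlo.trans_le hl.1
  have h1 : 1 / hi ≤ 1 / cfList l := one_div_le_one_div_of_le hpos hl.2
  have h2 : 1 / cfList l ≤ 1 / lo := one_div_le_one_div_of_le hlo hl.1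
  have ha' : (1 : ℝ) ≤ a ∧ (a : ℝ) ≤ 2 := by rcases ha with rfl | rfl <;> norm_num
  rw [cfList_cons]
  constructor <;> linarith

lemma cfList_mem_Icc_one_three :
    ∀ l : List ℕ, (∀ a ∈ l, a = 1 ∨ a = 2) → l ≠ [] → cfList l ∈ Icc 1 3
  | [], _, hne => absurd rfl hne
  | [a], h, _ => by
    rcases h a (by simp) with rfl | rfl <;> norm_num [cfList]
  | a :: b :: l, h, _ => by
    have ih := cfList_mem_Icc_one_three (b :: l) (fun x hx => h x (by simp [hx])) (by simp)
    have := cfList_cons_mem_Icc (h a (by simp)) one_pos ih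
    norm_num at this
    exact ⟨by linarith [this.1], this.2⟩

lemma le_cfList_of_length_ge_four :
    ∀ l : List ℕ, (∀ a ∈ l, a = 1 ∨ a = 2) → 4 ≤ l.length → 15 / 11 ≤ cfList l
  | a :: b :: c :: r, h, hlen => by
    have hr : cfList r ∈ Icc 1 3 :=
      cfList_mem_Icc_one_three r (fun x hx => h x (by simp [hx]))
        (by rintro rfl; simp at hlen)
    have hc := cfList_cons_mem_Icc (h c (by simp)) (by norm_num) hr
    norm_num at hc
    have hb := cfList_cons_mem_Icc (h b (by simp)) (by norm_num) hc
    norm_num at hb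
    have ha := cfList_cons_mem_Icc (h a (by simp)) (by norm_num) hb
    norm_num at ha
    exact ha.1
  | [], _, hlen | [_], _, hlen | [_, _], _, hlen => by simp at hlen

section

variable {a : ℕ → ℕ} {p : List ℕ} {x : ℝ}

lemma eventually_cfConvs_eq_cfWithTail (hp : (List.range p.length).map a = p)
    (htail : ∀ k, p.length ≤ k → a k = 1 ∨ a k = 2) :
    ∀ᶠ n in atTop, ∃ t : ℝ, 15 / 11 ≤ t ∧ cfConvs a n = cfWithTail p t := by
  filter_upwards [eventually_ge_atTop (p.length + 3)] with n hn
  obtain ⟨m, rfl⟩ := Nat.exists_eq_add_of_le hn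
  refine ⟨cfConvs (fun k => a (p.length + k)) (3 + m), le_cfList_of_length_ge_four _ ?_ (by simp),
    by rw [add_assoc, cfConvs_add, hp]⟩
  simp only [List.mem_map, List.mem_range]
  rintro _ ⟨k, -, rfl⟩
  exact htail _ (by omega)

lemma CFLim.cfWithTail_le_of_even (hx : CFLim a x) (hp : (List.range p.length).map a = p)
    (htail : ∀ k, p.length ≤ k → a k = 1 ∨ a k = 2) (heven : Even p.length) :
    cfWithTail p (15 / 11) ≤ x := by
  refine ge_of_tendsto hx ((eventually_cfConvs_eq_cfWithTail hp htail).mono ?_)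
  rintro n ⟨t, ht, hn⟩
  rw [hn]
  exact (cfWithTail_monotoneOn_of_even_antitoneOn_of_odd p).1 heven (by norm_num)
    (lt_of_lt_of_le (by norm_num) ht) ht

lemma CFLim.le_cfWithTail_of_odd (hx : CFLim a x) (hp : (List.range p.length).map a = p)
    (htail : ∀ k, p.length ≤ k → a k = 1 ∨ a k = 2) (hodd : Odd p.length) :
    x ≤ cfWithTail p (15 / 11) := by
  refine le_of_tendsto hx ((eventually_cfConvs_eq_cfWithTail hp htail).mono ?_)
  rintro n ⟨t, ht, hn⟩
  rw [hn]
  exact (cfWithTail_monotoneOn_of_even_antitoneOn_of_odd p).2 hodd (by norm_num)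
    (lt_of_lt_of_le (by norm_num) ht) ht

end

lemma epseq_mem {pre per : List ℕ} (hper : per ≠ []) {k : ℕ} (hk : pre.length ≤ k) :
    epseq pre per k ∈ per := by
  have hlen : 0 < per.length := List.length_pos_iff.mpr hper
  unfold epseq
  rw [if_neg (by omega), List.getD_eq_getElem _ _ (Nat.mod_lt _ hlen)]
  exact List.getElem_mem _

theorem stmt7 (B : ℤ → ℕ) (hB : ∀ n, B n = 1 ∨ B n = 2) (j : ℤ)
    (hpat : B (j - 2) = 1 ∧ B (j - 1) = 1 ∧ B j = 2 ∧ B (j + 1) = 1 ∧ B (j + 2) = 1)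
    (v : ℝ) (hv : IsLambda B j v) (x y : ℝ)
    (hx : CFLim (epseq [] [2,1,1,2,2,2,1]) x)
    (hy : CFLim (epseq [0,1,2,2,2,1,1,2,1] [2]) y) :
    v < cfList [2,1,1,1,2,1] + cfList [0,1,1,1,2,1] ∧
    cfList [2,1,1,1,2,1] + cfList [0,1,1,1,2,1] = 36 / 11 ∧
    36 / 11 < (x + y) - 1 / 100 := by
  obtain ⟨hm2, hm1, h0, h1, h2⟩ := hpat
  obtain ⟨x', y', hx', hy', rfl⟩ := hv
  have hx'le : x' ≤ cfWithTail [2, 1, 1] (15 / 11) :=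
    hx'.le_cfWithTail_of_odd (by simp [List.range_succ, h0, h1, h2])
      (fun k _ => hB _) (by decide)
  have hy'le : y' ≤ cfWithTail [0, 1, 1] (15 / 11) :=
    hy'.le_cfWithTail_of_odd (by simp [List.range_succ, hm1, hm2])
      (fun k hk => by simpa [show k ≠ 0 by simp at hk; omega] using hB _) (by decide)
  have hxge : cfWithTail [2, 1, 1, 2, 2, 2, 1, 2, 1, 1] (15 / 11) ≤ x :=
    hx.cfWithTail_le_of_even (by decide)
      (fun k _ => (by decide : ∀ a ∈ [2, 1, 1, 2, 2, 2, 1], a = 1 ∨ a = 2) _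
        (epseq_mem (by simp) k.zero_le)) (by decide)
  have hyge : cfWithTail [0, 1, 2, 2, 2, 1, 1, 2, 1, 2] (15 / 11) ≤ y :=
    hy.cfWithTail_le_of_even (by decide)
      (fun k hk => .inr (List.mem_singleton.mp (epseq_mem (by simp) (by simp at hk ⊢; omega))))
      (by decide)
  have h36 : cfList [2,1,1,1,2,1] + cfList [0,1,1,1,2,1] = 36 / 11 := by norm_num [cfList]
  norm_num [cfWithTail] at hx'le hy'le hxge hyge
  refine ⟨?_, h36, ?_⟩ <;> linarith
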